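/- Assume that T^P eliminates imaginaries. Then the following are equivalent for a set A ⊆ C: (i) A is complete; (ii) P^A ≺ P^C and dcl(A) ∩ P^C = P^A; (iii) P^A ≺ P^C and acl(A) ∩ P^C = P^A. (The implication (i) ⇒ (iii) holds without elimination of imaginaries.) -/

import Mathlib

open FirstOrder FirstOrder.Language Cardinal

universe u

namespace OverPredicate

variable (L : FirstOrder.Language.{u, u}) (C : Type u) [L.Structure C] [L.IsRelational]
variable (P : L.Relations 1)

/-- The set of realizations of the distinguished predicate `P` in the monster model `C`. -/
def Pset : Set C := { x | Structure.RelMap P ![x] }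

/-- The induced `L`-structure on a subset of the monster model
(the language is relational, so every subset is a substructure). -/
def setStructure (A : Set C) : L.Structure A where
  funMap := fun f _ => isEmptyElim f
  RelMap := fun r x => Structure.RelMap r (fun i => (x i : C))

/-- Realization of a formula in the structure induced on a subset `A` of the monster. -/
def RealizeIn (A : Set C) {α : Type*} (φ : L.Formula α) (v : α → A) : Prop :=
  letI := setStructure L C A
  φ.Realize v

/-- Satisfaction of a sentence in the structure induced on a subset of the monster. -/
def SatIn (A : Set C) (σ : L.Sentence) : Prop :=
  RealizeIn L C A σ (fun e => isEmptyElim e)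

/-- `A ≡ B`: the substructures of `C` with universes `A` and `B` are elementarily
equivalent, i.e. `Th(C|_A) = Th(C|_B)`. -/
def ElemEquivSets (A B : Set C) : Prop := ∀ σ : L.Sentence, SatIn L C A σ ↔ SatIn L C B σ

/-- `A ≺ B` for subsets of the monster model. -/
def ElemSubset (A B : Set C) : Prop :=
  ∃ h : A ⊆ B, ∀ (m : ℕ) (φ : L.Formula (Fin m)) (x : Fin m → A),
    RealizeIn L C A φ x ↔ RealizeIn L C B φ (fun i => ⟨(x i : C), h (x i).2⟩)

/-- `M ≺ C`: the subset `M` is the universe of an elementary submodel of the monster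
model; in particular `M ⊨ T`. -/
def ElemInC (M : Set C) : Prop :=
  ∀ (m : ℕ) (φ : L.Formula (Fin m)) (x : Fin m → M),
    RealizeIn L C M φ x ↔ φ.Realize (fun i => (x i : C))

/-- Formulas with parameters in `A` and `n` free variables. -/
def FormulaOver (A : Set C) (n : ℕ) :=
  Σ m : ℕ, L.Formula (Fin n ⊕ Fin m) × (Fin m → A)

/-- The tuple `c` realizes (in the monster) the formula `χ` with parameters in `A`. -/
def Realizes (A : Set C) {n : ℕ} (c : Fin n → C) (χ : FormulaOver L C A n) : Prop :=
  χ.2.1.Realize (Sum.elim c (fun i => (χ.2.2 i : C)))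

/-- The complete type of the tuple `c` over the set `A`. -/
def typeOf (A : Set C) {n : ℕ} (c : Fin n → C) : Set (FormulaOver L C A n) :=
  { χ | Realizes L C A c χ }

/-- `c` realizes the partial type `p` over `A`. -/
def RealizesAll (A : Set C) {n : ℕ} (c : Fin n → C) (p : Set (FormulaOver L C A n)) : Prop :=
  ∀ χ ∈ p, Realizes L C A c χ

/-- A partial type over `A` is consistent iff it is realized in the monster model. -/
def Consistent (A : Set C) {n : ℕ} (p : Set (FormulaOver L C A n)) : Prop :=
  ∃ c : Fin n → C, RealizesAll L C A c p

/-- `A ⊆ C` is complete: whenever `C ⊨ (∃ x̄ ⊆ P) ψ(x̄, b̄)` with `b̄` from `A`, there is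
a witness `ā` from `P ∩ A`. -/
def IsComplete (A : Set C) : Prop :=
  ∀ (k m : ℕ) (ψ : L.Formula (Fin k ⊕ Fin m)) (b : Fin m → C), (∀ i, b i ∈ A) →
    (∃ x : Fin k → C, (∀ i, x i ∈ Pset L C P) ∧ ψ.Realize (Sum.elim x b)) →
    ∃ a : Fin k → C, (∀ i, a i ∈ Pset L C P ∩ A) ∧ ψ.Realize (Sum.elim a b)

/-- `S_*(A)`: complete types over `A` (in `n` variables) weakly orthogonal to `P`. -/
def SStar (A : Set C) (n : ℕ) : Set (Set (FormulaOver L C A n)) :=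
  { p | ∃ c : Fin n → C, p = typeOf L C A c ∧
      Pset L C P ∩ (A ∪ Set.range c) = Pset L C P ∩ A ∧
      IsComplete L C P (A ∪ Set.range c) }

/-- `A` is stable over `P`: for every `A'` elementarily equivalent to `A`,
`|S_*(A')| ≤ |A'| ^ |T|`. -/
def IsStableSet (A : Set C) : Prop :=
  ∀ B : Set C, ElemEquivSets L C A B →
    #(Σ n : ℕ, ↥(SStar L C P B n)) ≤ #↥B ^ (Language.card L + ℵ₀)

/-- `T` is fully stable over `P`: every complete set is stable over `P`. -/
def FullyStable : Prop := ∀ A : Set C, IsComplete L C P A → IsStableSet L C P A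

/-- `T` is fully stable over `N ⊨ T^P`: every complete set with `P`-part `N` is stable. -/
def FullyStableOverSet (N : Set C) : Prop :=
  ∀ A : Set C, IsComplete L C P A → Pset L C P ∩ A = N → IsStableSet L C P A

/-- `A` has the existence property over `P`. -/
def HasExistence (A : Set C) : Prop :=
  ∃ M : Set C, ElemInC L C M ∧ A ⊆ M ∧ Pset L C P ∩ M = Pset L C P ∩ A

/-- Hypothesis 1: (i) `P` is stably embedded; (ii) `0`-definable subsets of `P^C` are
`0`-definable in the induced structure `C^P`; (iii) `T` has quantifier elimination. -/
def Hypothesis1 : Prop :=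
  (∀ (k m : ℕ) (ψ : L.Formula (Fin k ⊕ Fin m)) (a : Fin k → C),
    ∃ (l : ℕ) (θ : L.Formula (Fin m ⊕ Fin l)) (c : Fin l → C),
      (∀ i, c i ∈ Pset L C P) ∧
      ∀ y : Fin m → C, (∀ i, y i ∈ Pset L C P) →
        (ψ.Realize (Sum.elim a y) ↔ θ.Realize (Sum.elim y c))) ∧
  (∀ (m : ℕ) (φ : L.Formula (Fin m)),
    (∀ x : Fin m → C, φ.Realize x → ∀ i, x i ∈ Pset L C P) →
    ∃ θ : L.Formula (Fin m),
      ∀ x : Fin m → ↥(Pset L C P),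
        (φ.Realize (fun i => (x i : C)) ↔ RealizeIn L C (Pset L C P) θ x)) ∧
  (∀ (m : ℕ) (φ : L.Formula (Fin m)), ∃ θ : L.Formula (Fin m),
    θ.IsQF ∧ ∀ x : Fin m → C, (φ.Realize x ↔ θ.Realize x))

/-- A system of uniform defining formulas `Ψ_ψ(ȳ, z̄)`, one for each `ψ(x̄, ȳ)`. -/
def UniformDefs :=
  ∀ (k m : ℕ), L.Formula (Fin k ⊕ Fin m) → Σ l : ℕ, L.Formula (Fin m ⊕ Fin l)

/-- `U` is a system of uniform definitions of `ψ`-types over `P`. -/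
def IsUniformDefs (U : UniformDefs L) : Prop :=
  ∀ (k m : ℕ) (ψ : L.Formula (Fin k ⊕ Fin m)) (a : Fin k → C),
    ∃ c : Fin (U k m ψ).1 → C, (∀ i, c i ∈ Pset L C P) ∧
      ∀ y : Fin m → C, (∀ i, y i ∈ Pset L C P) →
        (ψ.Realize (Sum.elim a y) ↔ (U k m ψ).2.Realize (Sum.elim y c))

/-- Semantic implication between partial types over `A`. -/
def ImpliesSet (A : Set C) {n : ℕ} (r p : Set (FormulaOver L C A n)) : Prop :=
  ∀ c : Fin n → C, RealizesAll L C A c r → RealizesAll L C A c p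

/-- The restriction `p ↾ φ` of a type to instances (or negated instances) of `φ`. -/
def restrictTo (A : Set C) {n : ℕ} (p : Set (FormulaOver L C A n)) (m : ℕ)
    (φ : L.Formula (Fin n ⊕ Fin m)) : Set (FormulaOver L C A n) :=
  { χ ∈ p | ∃ b : Fin m → A, χ = ⟨m, φ, b⟩ ∨ χ = ⟨m, φ.not, b⟩ }

/-- A type over `A` is locally isolated if each of its restrictions `p ↾ φ` is
implied by a single formula in `p`. -/
def LocallyIsolated (A : Set C) {n : ℕ} (p : Set (FormulaOver L C A n)) : Prop :=
  ∀ (m : ℕ) (φ : L.Formula (Fin n ⊕ Fin m)),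
    ∃ θ ∈ p, ImpliesSet L C A {θ} (restrictTo L C A p m φ)

/-- A type `p` is `λ`-isolated if it is implied by a subset of size `< λ`. -/
def LambdaIsolated (A : Set C) {n : ℕ} (lam : Cardinal.{u})
    (p : Set (FormulaOver L C A n)) : Prop :=
  ∃ r ⊆ p, #↥r < lam ∧ ImpliesSet L C A r p

/-- `D` is locally constructible over `B`. -/
def LocallyConstructible (B D : Set C) : Prop :=
  B ⊆ D ∧ ∃ (α : Ordinal.{u}) (d : Ordinal.{u} → C),
    D = B ∪ d '' Set.Iio α ∧
    ∀ i < α, LocallyIsolated L C (B ∪ d '' Set.Iio i)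
      (typeOf L C (B ∪ d '' Set.Iio i) (fun _ : Fin 1 => d i))

/-- Relativized universal quantification: `(∀ z̄ ⊆ P) θ(·, z̄)`. -/
noncomputable def pAlls {α : Type*} (l : ℕ) (θ : L.Formula (α ⊕ Fin l)) : L.Formula α :=
  Formula.iAlls (Fin l)
    ((List.finRange l).foldr
      (fun j acc => (Relations.formula P ![Term.var (Sum.inr j)]).imp acc) θ)

/-- Relativized existential quantification: `(∃ z̄ ⊆ P) θ(·, z̄)`. -/
noncomputable def pExs {α : Type*} (l : ℕ) (θ : L.Formula (α ⊕ Fin l)) : L.Formula α :=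
  Formula.iExs (Fin l)
    ((List.finRange l).foldr
      (fun j acc => (Relations.formula P ![Term.var (Sum.inr j)]) ⊓ acc) θ)

/-- Standardize a formula `ψ(x̄, ȳ, z̄)` to the shape `ψ(w̄, z̄)` used for uniform definitions. -/
def psiStd {n m l : ℕ} (ψ : L.Formula ((Fin n ⊕ Fin m) ⊕ Fin l)) :
    L.Formula (Fin (n + m) ⊕ Fin l) :=
  ψ.relabel (Sum.map (⇑finSumFinEquiv) id)

/-- The number of parameters of the uniform definition of `ψ`. -/
def defLen (U : UniformDefs L) {n m l : ℕ} (ψ : L.Formula ((Fin n ⊕ Fin m) ⊕ Fin l)) : ℕ :=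
  (U (n + m) l (psiStd L ψ)).1

/-- The uniform defining formula `Ψ_ψ(z̄, w̄)` for `ψ(x̄, ȳ, z̄)`. -/
def defFml (U : UniformDefs L) {n m l : ℕ} (ψ : L.Formula ((Fin n ⊕ Fin m) ⊕ Fin l)) :
    L.Formula (Fin l ⊕ Fin (defLen L U ψ)) :=
  (U (n + m) l (psiStd L ψ)).2

/-- Combine two parameter tuples into one. -/
def combParams {γ : Type*} {m l : ℕ} (b : Fin m → γ) (d : Fin l → γ) : Fin (m + l) → γ :=
  fun i => Sum.elim b d (finSumFinEquiv.symm i)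

/-- The formula `(∀ z̄ ⊆ P) [ψ(x̄, ȳ, z̄) ↔ Ψ_ψ(z̄, w̄)]`, with free variables `x̄` and
parameter slots `ȳ w̄`. -/
noncomputable def eqDefFormula (U : UniformDefs L) {n m l : ℕ}
    (ψ : L.Formula ((Fin n ⊕ Fin m) ⊕ Fin l)) :
    L.Formula (Fin n ⊕ Fin (m + defLen L U ψ)) :=
  pAlls L P l
    ((ψ.relabel (fun v => match v with
        | Sum.inl (Sum.inl i) => Sum.inl (Sum.inl i)
        | Sum.inl (Sum.inr j) => Sum.inl (Sum.inr (Fin.castAdd (defLen L U ψ) j))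
        | Sum.inr z => Sum.inr z)).iff
      ((defFml L U ψ).relabel (fun v => match v with
        | Sum.inl z => Sum.inr z
        | Sum.inr j => Sum.inl (Sum.inr (Fin.natAdd m j)))))

/-- The formula `[(∃ z̄ ⊆ P) ψ(x̄, ȳ, z̄)] → ψ(x̄, ȳ, z̄')`, with free variables `x̄` and
parameter slots `ȳ z̄'`. -/
noncomputable def exImpFormula {n m l : ℕ}
    (ψ : L.Formula ((Fin n ⊕ Fin m) ⊕ Fin l)) :
    L.Formula (Fin n ⊕ Fin (m + l)) :=
  (pExs L P l (ψ.relabel (fun v => match v with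
      | Sum.inl (Sum.inl i) => Sum.inl (Sum.inl i)
      | Sum.inl (Sum.inr j) => Sum.inl (Sum.inr (Fin.castAdd l j))
      | Sum.inr z => Sum.inr z))).imp
    (ψ.relabel (fun v => match v with
      | Sum.inl (Sum.inl i) => Sum.inl i
      | Sum.inl (Sum.inr j) => Sum.inr (Fin.castAdd l j)
      | Sum.inr z => Sum.inr (Fin.natAdd m z)))

/-- `r` is a `Δ`-type over `A`. -/
def IsDeltaType (A : Set C) {n : ℕ} (Δ : Set (Σ m : ℕ, L.Formula (Fin n ⊕ Fin m)))
    (r : Set (FormulaOver L C A n)) : Prop :=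
  ∀ χ ∈ r, ∃ ψ ∈ Δ, ∃ b : Fin ψ.1 → A,
    χ = ⟨ψ.1, ψ.2, b⟩ ∨ χ = ⟨ψ.1, ψ.2.not, b⟩

/-- `r` and `s` are explicitly contradictory. -/
def ExplicitlyContradictory (A : Set C) {n : ℕ}
    (r s : Set (FormulaOver L C A n)) : Prop :=
  ∃ (m : ℕ) (ψ : L.Formula (Fin n ⊕ Fin m)) (b : Fin m → A),
    (⟨m, ψ, b⟩ : FormulaOver L C A n) ∈ r ∧ (⟨m, ψ.not, b⟩ : FormulaOver L C A n) ∈ s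

/-- The rank `R^n_A(p, Δ₁, Δ₂, λ) ≥ β` (for finite `β`), relative to a fixed system `U`
of uniform defining formulas. -/
noncomputable def RankGE (U : UniformDefs L) (A : Set C) (n : ℕ)
    (Δ₁ : Set (Σ m : ℕ, L.Formula (Fin n ⊕ Fin m)))
    (Δ₂ : Set (Σ m : ℕ, Σ l : ℕ, L.Formula ((Fin n ⊕ Fin m) ⊕ Fin l)))
    (lam : Cardinal.{u}) : ℕ → Set (FormulaOver L C A n) → Prop
  | 0, p => Consistent L C A p
  | (β + 1), p =>
      if Even β then
        ∀ μ : Ordinal.{u}, μ.card < lam → ∀ q ⊆ p, q.Finite →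
          ∃ r : { i : Ordinal.{u} // i ≤ μ } → Set (FormulaOver L C A n),
            (∀ i, IsDeltaType L C A Δ₁ (r i)) ∧
            (∀ i j, i ≠ j → ExplicitlyContradictory L C A (r i) (r j)) ∧
            (∀ i, RankGE U A n Δ₁ Δ₂ lam β (q ∪ r i))
      else
        ∀ μ : Ordinal.{u}, μ.card < lam → ∀ q ⊆ p, q.Finite →
          ∀ ψ : { i : Ordinal.{u} // i ≤ μ } →
              (Σ m : ℕ, Σ l : ℕ, L.Formula ((Fin n ⊕ Fin m) ⊕ Fin l)),
            (∀ i, ψ i ∈ Δ₂) →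
            ∀ b : ∀ i, Fin (ψ i).1 → A,
              ∃ d : ∀ i, Fin (defLen L U (ψ i).2.2) → ↥(Pset L C P ∩ A),
                RankGE U A n Δ₁ Δ₂ lam β
                  (q ∪ Set.range fun i =>
                    (⟨(ψ i).1 + defLen L U (ψ i).2.2, eqDefFormula L P U (ψ i).2.2,
                      combParams (b i) (fun j => (⟨(d i j : C), (d i j).2.2⟩ : A))⟩ :
                      FormulaOver L C A n))

/-- The definable closure of `A` in the monster model. -/
def dclSet (A : Set C) : Set C :=
  { b | ∃ (k : ℕ) (φ : L.Formula (Fin 1 ⊕ Fin k)) (a : Fin k → A),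
      φ.Realize (Sum.elim (fun _ => b) (fun i => (a i : C))) ∧
      ∀ b' : C, φ.Realize (Sum.elim (fun _ => b') (fun i => (a i : C))) → b' = b }

/-- The algebraic closure of `A` in the monster model. -/
def aclSet (A : Set C) : Set C :=
  { b | ∃ (k : ℕ) (φ : L.Formula (Fin 1 ⊕ Fin k)) (a : Fin k → A),
      φ.Realize (Sum.elim (fun _ => b) (fun i => (a i : C))) ∧
      { b' : C | φ.Realize (Sum.elim (fun _ => b') (fun i => (a i : C))) }.Finite }

/-- `T^P` eliminates imaginaries: every subset of a power of `P^C` definable with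
parameters in the induced structure `C^P` has a code there. -/
def EliminatesImaginariesP : Prop :=
  ∀ (n : ℕ) (X : Set (Fin n → ↥(Pset L C P))),
    (∃ (k : ℕ) (ψ : L.Formula (Fin n ⊕ Fin k)) (b : Fin k → ↥(Pset L C P)),
        ∀ x, x ∈ X ↔ RealizeIn L C (Pset L C P) ψ (Sum.elim x b)) →
    ∃ (l : ℕ) (φ : L.Formula (Fin n ⊕ Fin l)) (c : Fin l → ↥(Pset L C P)),
      (∀ x, x ∈ X ↔ RealizeIn L C (Pset L C P) φ (Sum.elim x c)) ∧
      ∀ c' : Fin l → ↥(Pset L C P),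
        (∀ x, x ∈ X ↔ RealizeIn L C (Pset L C P) φ (Sum.elim x c')) → c' = c

/-- The subset `N` of the monster is `λ`-saturated (as an `L`-structure). -/
def IsSaturatedSet (N : Set C) (lam : Cardinal.{u}) : Prop :=
  ∀ p : Set (Σ k : ℕ, L.Formula (Fin 1 ⊕ Fin k) × (Fin k → N)),
    #↥p < lam →
    (∀ q ⊆ p, q.Finite →
       ∃ c : N, ∀ χ ∈ q, RealizeIn L C N χ.2.1 (Sum.elim (fun _ : Fin 1 => c) χ.2.2)) →
    ∃ c : N, ∀ χ ∈ p, RealizeIn L C N χ.2.1 (Sum.elim (fun _ : Fin 1 => c) χ.2.2)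

/-- `f` is a partial elementary map from `D` into the monster model. -/
def PartialElemMap (D : Set C) (f : D → C) : Prop :=
  ∀ (m : ℕ) (φ : L.Formula (Fin m)) (x : Fin m → D),
    φ.Realize (fun i => ((x i) : C)) ↔ φ.Realize (fun i => f (x i))


/-!
Completeness of `A` says exactly that `P^A` satisfies the Tarski–Vaught test inside `C^P`
for formulas with parameters from `A`; applied to parameters from `P^A` (via relativization of
quantifiers to `P`) it gives `P^A ≺ P^C`. If `b ∈ P` is one of the finitely many solutions
`x̄` of `φ(·, ā)` in `P`, with `ā ⊆ A`, then "every solution of `φ(·, ā)` in `P` is among `x̄`"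
has a solution in `P^A`, which forces `b ∈ A`.

Conversely, let `ψ(x̄, b̄)` with `b̄ ⊆ A` have a solution in `P`. By stable embeddedness the trace
`ψ(P, b̄)` is definable in `C^P`, so by elimination of imaginaries it has a code `c̄ ⊆ P`. The code
is determined by `ψ(·, b̄)`, so `c̄ ⊆ dcl(A) ∩ P = P^A`, and `P^A ≺ P^C` yields a solution of the
defining formula `φ(x̄, c̄)` inside `P^A`.
-/

-- Reopened to drop the section variables above, so that each lemma binds only what it uses.
end OverPredicate

namespace OverPredicate

section RelativizedQuantifiers

variable {L : FirstOrder.Language.{u, u}} {M : Type u} [L.Structure M] {P : L.Relations 1}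
  {α : Type*}

theorem realize_formula_var_iff_mem_Pset (v : α → M) (a : α) :
    (Relations.formula P ![Term.var a]).Realize v ↔ v a ∈ Pset L M P := by
  rw [Formula.realize_rel, Pset, Set.mem_ofPred_eq, iff_iff_eq]
  congr with i
  fin_cases i
  rfl

theorem realize_foldr_guard_imp {l : ℕ} (θ : L.Formula (α ⊕ Fin l)) (v : α ⊕ Fin l → M)
    (js : List (Fin l)) :
    ((js.foldr (fun j acc => (Relations.formula P ![Term.var (Sum.inr j)]).imp acc) θ).Realize v
      ↔ ((∀ j ∈ js, v (Sum.inr j) ∈ Pset L M P) → θ.Realize v)) := by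
  induction js with
  | nil => simp
  | cons j js ih =>
    simp only [List.foldr_cons, Formula.realize_imp, realize_formula_var_iff_mem_Pset, ih,
      List.forall_mem_cons, and_imp]

theorem realize_foldr_guard_inf {l : ℕ} (θ : L.Formula (α ⊕ Fin l)) (v : α ⊕ Fin l → M)
    (js : List (Fin l)) :
    ((js.foldr (fun j acc => Relations.formula P ![Term.var (Sum.inr j)] ⊓ acc) θ).Realize v
      ↔ (∀ j ∈ js, v (Sum.inr j) ∈ Pset L M P) ∧ θ.Realize v) := by
  induction js with
  | nil => simp
  | cons j js ih =>
    simp only [List.foldr_cons, Formula.realize_inf, realize_formula_var_iff_mem_Pset, ih,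
      List.forall_mem_cons, and_assoc]

theorem realize_pAlls {l : ℕ} (θ : L.Formula (α ⊕ Fin l)) (v : α → M) :
    (pAlls L P l θ).Realize v ↔
      ∀ z : Fin l → M, (∀ j, z j ∈ Pset L M P) → θ.Realize (Sum.elim v z) := by
  simp [pAlls, realize_foldr_guard_imp]

theorem realize_pExs {l : ℕ} (θ : L.Formula (α ⊕ Fin l)) (v : α → M) :
    (pExs L P l θ).Realize v ↔
      ∃ z : Fin l → M, (∀ j, z j ∈ Pset L M P) ∧ θ.Realize (Sum.elim v z) := by
  simp [pExs, realize_foldr_guard_inf]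

end RelativizedQuantifiers

section Relativize

variable {L : FirstOrder.Language.{u, u}} {α : Type*}

def relativize (P : L.Relations 1) : ∀ {n : ℕ}, L.BoundedFormula α n → L.BoundedFormula α n
  | _, .falsum => .falsum
  | _, .equal t u => .equal t u
  | _, .rel R ts => .rel R ts
  | _, .imp f g => (relativize P f).imp (relativize P g)
  | n, .all f => (P.boundedFormula₁ (.var (.inr (Fin.last n))) ⟹ relativize P f).all

variable {M N : Type u} [L.Structure M] [L.Structure N] {P : L.Relations 1}

theorem realize_relativize (f : M ↪[L] N) (hf : Set.range f = Pset L N P)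
    {n : ℕ} (φ : L.BoundedFormula α n) (v : α → M) (xs : Fin n → M) :
    (relativize P φ).Realize (f ∘ v) (f ∘ xs) ↔ φ.Realize v xs := by
  induction φ with
  | falsum => rfl
  | equal t u =>
    simp [relativize, BoundedFormula.Realize, ← Sum.comp_elim, HomClass.realize_term]
  | rel R ts =>
    simp only [relativize, BoundedFormula.Realize, ← Sum.comp_elim, HomClass.realize_term]
    exact f.map_rel R _
  | imp φ ψ ihφ ihψ => simp [relativize, ihφ, ihψ]
  | all φ ih =>
    simp only [relativize, BoundedFormula.realize_all, BoundedFormula.realize_imp,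
      BoundedFormula.realize_rel₁, Term.realize_var, Sum.elim_inr, Fin.snoc_last]
    refine ⟨fun h a => ?_, fun h y hy => ?_⟩
    · rw [← ih, Fin.comp_snoc]
      exact h (f a) (show f a ∈ Pset L N P from hf ▸ Set.mem_range_self a)
    · obtain ⟨a, rfl⟩ : y ∈ Set.range f := hf.symm ▸ hy
      rw [← Fin.comp_snoc, ih]
      exact h a

end Relativize

theorem _root_.FirstOrder.Language.ElementaryEmbedding.exists_realize_sumElim
    {L : FirstOrder.Language} {M N : Type*} [L.Structure M] [L.Structure N] (f : M ↪ₑ[L] N)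
    {α β : Type*} [Finite β] (φ : L.Formula (β ⊕ α)) (v : α → M)
    (h : ∃ x : β → N, φ.Realize (Sum.elim x (f ∘ v))) :
    ∃ w : β → M, φ.Realize (Sum.elim (f ∘ w) (f ∘ v)) := by
  obtain ⟨x, hx⟩ := h
  have hex : ((φ.relabel Sum.swap).iExs β).Realize (f ∘ v) :=
    Formula.realize_iExs.2 ⟨x, by rwa [Formula.realize_relabel, Sum.elim_swap]⟩
  obtain ⟨w, hw⟩ := Formula.realize_iExs.1 ((f.map_formula _ v).1 hex)
  refine ⟨w, ?_⟩
  rwa [← Sum.elim_swap, ← Formula.realize_relabel, ← Sum.comp_elim, f.map_formula]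

section Closures

variable {L : FirstOrder.Language.{u, u}} {C : Type u} [L.Structure C] {P : L.Relations 1}
  {A : Set C}

theorem subset_dclSet : A ⊆ dclSet L C A := fun b hb =>
  ⟨1, Term.equal (Term.var (Sum.inl 0)) (Term.var (Sum.inr 0)), fun _ => ⟨b, hb⟩,
    by simp, fun b' h => by simpa using h⟩

theorem dclSet_subset_aclSet : dclSet L C A ⊆ aclSet L C A :=
  fun _ ⟨k, φ, a, hb, huniq⟩ => ⟨k, φ, a, hb, (Set.finite_singleton _).subset huniq⟩

theorem dclSet_inter_Pset_of_aclSet_inter_Pset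
    (h : aclSet L C A ∩ Pset L C P = Pset L C P ∩ A) :
    dclSet L C A ∩ Pset L C P = Pset L C P ∩ A :=
  le_antisymm (fun _ hb => h ▸ ⟨dclSet_subset_aclSet hb.1, hb.2⟩)
    (fun _ hb => ⟨subset_dclSet hb.2, hb.1⟩)

theorem mem_dclSet_of_forall_eq {l m : ℕ} (χ : L.Formula (Fin m ⊕ Fin l)) {b : Fin m → C}
    (hb : ∀ i, b i ∈ A) {c : Fin l → C} (hcP : ∀ j, c j ∈ Pset L C P)
    (hχ : χ.Realize (Sum.elim b c))
    (huniq : ∀ c' : Fin l → C, (∀ j, c' j ∈ Pset L C P) → χ.Realize (Sum.elim b c') → c' = c)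
    (j : Fin l) : c j ∈ dclSet L C A := by
  let δ : L.Formula (Fin 1 ⊕ Fin m) := pExs L P l
    (Term.equal (Term.var (Sum.inl (Sum.inl 0))) (Term.var (Sum.inr j)) ⊓
      χ.relabel (Sum.map Sum.inr id))
  have hδ : ∀ z, δ.Realize (Sum.elim (fun _ => z) b) ↔
      ∃ c' : Fin l → C, (∀ j, c' j ∈ Pset L C P) ∧ z = c' j ∧ χ.Realize (Sum.elim b c') := by
    intro z
    simp [δ, realize_pExs, Sum.elim_comp_map]
  refine ⟨m, δ, fun i => ⟨b i, hb i⟩, (hδ _).2 ⟨c, hcP, rfl, hχ⟩, fun z hz => ?_⟩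
  obtain ⟨c', hc'P, rfl, hc'⟩ := (hδ z).1 hz
  rw [huniq c' hc'P hc']

theorem IsComplete.exists_realize_snoc (hA : IsComplete L C P A) {n : ℕ}
    (φ : L.BoundedFormula Empty (n + 1)) {x : Fin n → C} (hx : ∀ i, x i ∈ A) {a : C}
    (ha : a ∈ Pset L C P) (h : φ.Realize default (Fin.snoc x a)) :
    ∃ b ∈ Pset L C P ∩ A, φ.Realize default (Fin.snoc x b) := by
  let g : Empty ⊕ Fin (n + 1) → Fin 1 ⊕ Fin n :=
    Sum.elim Empty.elim (Fin.lastCases (Sum.inl 0) Sum.inr)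
  have key : ∀ y : Fin 1 → C,
      (φ.toFormula.relabel g).Realize (Sum.elim y x) ↔ φ.Realize default (Fin.snoc x (y 0)) := by
    intro y
    rw [Formula.realize_relabel, BoundedFormula.realize_toFormula, iff_iff_eq]
    congr 1
    · exact Subsingleton.elim _ _
    · funext j
      induction j using Fin.lastCases <;> simp [g]
  obtain ⟨b, hb, hbφ⟩ := hA 1 n _ x hx ⟨fun _ => a, fun _ => ha, (key _).2 h⟩
  exact ⟨b 0, hb 0, (key b).1 hbφ⟩

theorem IsComplete.aclSet_inter_Pset_subset (hA : IsComplete L C P A) :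
    aclSet L C A ∩ Pset L C P ⊆ A := by
  rintro b ⟨⟨k, φ, a, hb, hfin⟩, hbP⟩
  let S := {y | φ.Realize (Sum.elim (fun _ => y) (fun i => (a i : C)))} ∩ Pset L C P
  have : Finite S := (hfin.inter_of_left _).to_subtype
  obtain ⟨n, ⟨e⟩⟩ := Finite.exists_equiv_fin S
  -- `ψ(x̄, ā)`: every solution of `φ(·, ā)` in `P` is among the `xᵢ`
  let ψ : L.Formula (Fin n ⊕ Fin k) := pAlls L P 1
    ((φ.relabel (Sum.elim Sum.inr (Sum.inl ∘ Sum.inr))).imp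
      (Formula.iSup fun i => Term.equal (Term.var (Sum.inr 0)) (Term.var (Sum.inl (Sum.inl i)))))
  have hψ : ∀ x : Fin n → C, ψ.Realize (Sum.elim x (fun i => (a i : C))) ↔
      ∀ y ∈ S, ∃ i, y = x i := by
    intro x
    simp only [ψ, realize_pAlls, Formula.realize_imp, Formula.realize_relabel,
      Formula.realize_iSup, Formula.realize_equal, Term.realize_var, Sum.comp_elim,
      Sum.elim_inl, Sum.elim_inr, Sum.elim_comp_inr]
    refine ⟨fun h y hy => h (fun _ => y) (fun _ => hy.2) hy.1, fun h z hzP hz => ?_⟩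
    have hz0 : z = fun _ => z 0 := funext fun j => by rw [Subsingleton.elim j 0]
    exact h (z 0) ⟨hz0 ▸ hz, hzP 0⟩
  obtain ⟨w, hwA, hw⟩ := hA n k ψ _ (fun i => (a i).2)
    ⟨fun i => e.symm i, fun i => (e.symm i).2.2, (hψ _).2 fun y hy => ⟨e ⟨y, hy⟩, by simp⟩⟩
  obtain ⟨i, rfl⟩ := (hψ w).1 hw b ⟨hb, hbP⟩
  exact (hwA i).2

theorem IsComplete.aclSet_inter_Pset (hA : IsComplete L C P A) :
    aclSet L C A ∩ Pset L C P = Pset L C P ∩ A :=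
  le_antisymm (fun _ hb => ⟨hb.2, hA.aclSet_inter_Pset_subset hb⟩)
    (fun _ hb => ⟨dclSet_subset_aclSet (subset_dclSet hb.2), hb.1⟩)

end Closures

section InducedStructure

variable {L : FirstOrder.Language.{u, u}} [L.IsRelational] {C : Type u} [L.Structure C]
  {P : L.Relations 1} {A : Set C}

attribute [local instance] setStructure

def subtypeEmbedding (A : Set C) : A ↪[L] C where
  toFun := Subtype.val
  inj' := Subtype.val_injective
  map_fun' f := isEmptyElim f
  map_rel' _ _ := Iff.rfl

def inclusionEmbedding {A B : Set C} (h : A ⊆ B) : A ↪[L] B where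
  toFun := Set.inclusion h
  inj' := Set.inclusion_injective h
  map_fun' f := isEmptyElim f
  map_rel' _ _ := Iff.rfl

def ElemSubset.toElementaryEmbedding {B D : Set C} (h : ElemSubset L C B D) : B ↪ₑ[L] D where
  toFun := Set.inclusion h.1
  map_formula' _ φ x := (h.2 _ φ x).symm

theorem realize_relativize_subtype {α : Type*} {n : ℕ} (φ : L.BoundedFormula α n)
    (v : α → Pset L C P) (xs : Fin n → Pset L C P) :
    (relativize P φ).Realize (Subtype.val ∘ v) (Subtype.val ∘ xs) ↔ φ.Realize v xs :=
  realize_relativize (subtypeEmbedding _) Subtype.range_coe φ v xs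

theorem formula_realize_relativize_subtype {α : Type*} (φ : L.Formula α)
    (v : α → Pset L C P) :
    Formula.Realize (relativize P φ) (Subtype.val ∘ v) ↔ φ.Realize v := by
  have h := realize_relativize_subtype φ v default
  rwa [Unique.eq_default (Subtype.val ∘ default)] at h

theorem IsComplete.elemSubset (hA : IsComplete L C P A) :
    ElemSubset L C (Pset L C P ∩ A) (Pset L C P) := by
  let ι := inclusionEmbedding (L := L) (Set.inter_subset_left : Pset L C P ∩ A ⊆ Pset L C P)
  refine ⟨Set.inter_subset_left, fun m φ x => (ι.isElementary_of_exists ?_ φ x).symm⟩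
  intro n φ x a hφ
  rw [← realize_relativize_subtype, Fin.comp_snoc,
    Unique.eq_default (Subtype.val ∘ default)] at hφ
  obtain ⟨b, hb, hbφ⟩ := hA.exists_realize_snoc _ (x := fun i => x i) (fun i => (x i).2.2) a.2 hφ
  refine ⟨⟨b, hb⟩, ?_⟩
  rw [← realize_relativize_subtype, Fin.comp_snoc, Unique.eq_default (Subtype.val ∘ default)]
  exact hbφ

theorem Hypothesis1.exists_realizeIn_Pset_iff (h1 : Hypothesis1 L C P) {k m : ℕ}
    (ψ : L.Formula (Fin k ⊕ Fin m)) (b : Fin m → C) :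
    ∃ (l : ℕ) (θ : L.Formula (Fin k ⊕ Fin l)) (c : Fin l → Pset L C P),
      ∀ x : Fin k → Pset L C P,
        ψ.Realize (Sum.elim (Subtype.val ∘ x) b) ↔ RealizeIn L C (Pset L C P) θ (Sum.elim x c) := by
  obtain ⟨l, θ, c, hcP, hθ⟩ := h1.1 m k (ψ.relabel Sum.swap) b
  -- `θ(x̄, z̄) ∧ x̄z̄ ⊆ P` is `0`-definable with all its solutions in `P`
  let θP : L.Formula (Fin (k + l)) :=
    (θ ⊓ Formula.iInf fun i => Relations.formula P ![Term.var i]).relabel finSumFinEquiv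
  have hθP : ∀ v : Fin k ⊕ Fin l → C, θP.Realize (v ∘ finSumFinEquiv.symm) ↔
      θ.Realize v ∧ ∀ i, v i ∈ Pset L C P := by
    intro v
    simp only [θP, Formula.realize_relabel, Function.comp_assoc, Equiv.symm_comp_self,
      Function.comp_id, Formula.realize_inf, Formula.realize_iInf,
      realize_formula_var_iff_mem_Pset]
  obtain ⟨θ', hθ'⟩ := h1.2.1 (k + l) θP fun v hv i => by
    simpa using ((hθP (v ∘ finSumFinEquiv)).1 (by simpa [Function.comp_assoc] using hv)).2
      (finSumFinEquiv.symm i)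
  let cP : Fin l → Pset L C P := fun j => ⟨c j, hcP j⟩
  refine ⟨l, θ'.relabel finSumFinEquiv.symm, cP, fun x => ?_⟩
  calc ψ.Realize (Sum.elim (Subtype.val ∘ x) b)
      ↔ θ.Realize (Sum.elim (fun i => (x i : C)) c) := by
        rw [← hθ _ fun i => (x i).2, Formula.realize_relabel, Sum.elim_swap]
        rfl
    _ ↔ θP.Realize (Subtype.val ∘ Sum.elim x cP ∘ finSumFinEquiv.symm) := by
        rw [← Function.comp_assoc, hθP, Sum.comp_elim]
        refine (and_iff_left ?_).symm
        rintro (i | j)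
        exacts [(x i).2, hcP j]
    _ ↔ _ := (hθ' _).trans Formula.realize_relabel.symm

theorem coe_mem_dclSet_of_isCode {k l m : ℕ} (ψ : L.Formula (Fin k ⊕ Fin m)) {b : Fin m → C}
    (hb : ∀ i, b i ∈ A) (φ : L.Formula (Fin k ⊕ Fin l)) {c : Fin l → Pset L C P}
    (hc : ∀ x, ψ.Realize (Sum.elim (Subtype.val ∘ x) b) ↔ φ.Realize (Sum.elim x c))
    (huniq : ∀ c', (∀ x, ψ.Realize (Sum.elim (Subtype.val ∘ x) b) ↔ φ.Realize (Sum.elim x c')) →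
      c' = c)
    (j : Fin l) : (c j : C) ∈ dclSet L C A := by
  -- `χ(b̄, c̄')`: `φ(·, c̄')` and `ψ(·, b̄)` have the same solutions in `P`
  let χ : L.Formula (Fin m ⊕ Fin l) := pAlls L P k
    ((ψ.relabel (Sum.elim Sum.inr (Sum.inl ∘ Sum.inl))).iff
      (Formula.relabel (Sum.elim Sum.inr (Sum.inl ∘ Sum.inr)) (relativize P φ)))
  have hχ : ∀ c' : Fin l → Pset L C P, χ.Realize (Sum.elim b (Subtype.val ∘ c')) ↔
      ∀ x, ψ.Realize (Sum.elim (Subtype.val ∘ x) b) ↔ φ.Realize (Sum.elim x c') := by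
    intro c'
    simp only [χ, realize_pAlls, Formula.realize_iff, Formula.realize_relabel, Sum.comp_elim,
      ← Function.comp_assoc, Sum.elim_comp_inl, Sum.elim_comp_inr,
      ← formula_realize_relativize_subtype]
    exact ⟨fun h x => h _ fun i => (x i).2, fun h z hz => h fun i => ⟨z i, hz i⟩⟩
  refine mem_dclSet_of_forall_eq χ hb (fun j => (c j).2) ((hχ c).2 hc) (fun c' hc'P hc' => ?_) j
  have := huniq (fun j => ⟨c' j, hc'P j⟩) ((hχ _).1 hc')
  exact funext fun j => congrArg Subtype.val (congrFun this j)

theorem isComplete_of_elemSubset_of_dclSet_inter_Pset (h1 : Hypothesis1 L C P)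
    (hEI : EliminatesImaginariesP L C P) (hel : ElemSubset L C (Pset L C P ∩ A) (Pset L C P))
    (hdcl : dclSet L C A ∩ Pset L C P = Pset L C P ∩ A) : IsComplete L C P A := by
  rintro k m ψ b hb ⟨x, hxP, hx⟩
  obtain ⟨l, θ, c, hθ⟩ := h1.exists_realizeIn_Pset_iff ψ b
  obtain ⟨l₀, φ, c₀, hc₀, huniq⟩ :=
    hEI k {x | ψ.Realize (Sum.elim (Subtype.val ∘ x) b)} ⟨l, θ, c, hθ⟩
  have hc₀A : ∀ j, (c₀ j : C) ∈ Pset L C P ∩ A := fun j =>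
    hdcl ▸ ⟨coe_mem_dclSet_of_isCode ψ hb φ hc₀ huniq j, (c₀ j).2⟩
  obtain ⟨w, hw⟩ := hel.toElementaryEmbedding.exists_realize_sumElim φ
    (fun j => ⟨c₀ j, hc₀A j⟩) ⟨fun i => ⟨x i, hxP i⟩, (hc₀ _).1 hx⟩
  exact ⟨fun i => w i, fun i => (w i).2, (hc₀ _).2 hw⟩

end InducedStructure

variable (L : FirstOrder.Language.{u, u}) (C : Type u) [L.Structure C] [L.IsRelational]
variable (P : L.Relations 1)

/-- Assume `T^P` eliminates imaginaries.  Then `A` is complete iff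
`P^A ≺ P^C` and `dcl(A) ∩ P^C = P^A`, iff `P^A ≺ P^C` and `acl(A) ∩ P^C = P^A`.
The implication (i) ⇒ (iii) holds without elimination of imaginaries. -/
theorem completeness_via_dcl_acl
    (h1 : Hypothesis1 L C P) (A : Set C) :
    (EliminatesImaginariesP L C P →
      ((IsComplete L C P A ↔
          (ElemSubset L C (Pset L C P ∩ A) (Pset L C P) ∧
           dclSet L C A ∩ Pset L C P = Pset L C P ∩ A)) ∧
       (IsComplete L C P A ↔
          (ElemSubset L C (Pset L C P ∩ A) (Pset L C P) ∧
           aclSet L C A ∩ Pset L C P = Pset L C P ∩ A)))) ∧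
    (IsComplete L C P A →
      (ElemSubset L C (Pset L C P ∩ A) (Pset L C P) ∧
       aclSet L C A ∩ Pset L C P = Pset L C P ∩ A)) := by
  have complete_acl (hA : IsComplete L C P A) :
      ElemSubset L C (Pset L C P ∩ A) (Pset L C P) ∧
        aclSet L C A ∩ Pset L C P = Pset L C P ∩ A :=
    ⟨hA.elemSubset, hA.aclSet_inter_Pset⟩
  refine ⟨fun hEI => ⟨⟨fun hA => ?_, fun h => ?_⟩, ⟨complete_acl, fun h => ?_⟩⟩, complete_acl⟩
  · exact ⟨hA.elemSubset, dclSet_inter_Pset_of_aclSet_inter_Pset hA.aclSet_inter_Pset⟩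
  · exact isComplete_of_elemSubset_of_dclSet_inter_Pset h1 hEI h.1 h.2
  · exact isComplete_of_elemSubset_of_dclSet_inter_Pset h1 hEI h.1
      (dclSet_inter_Pset_of_aclSet_inter_Pset h.2)

end OverPredicate
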